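/- Let α be a natural number, h > 0 a real parameter, and let u : [0,∞) → ℝ be twice continuously differentiable and compactly supported with u(0) = 0 and u'(0) = 0. Define the Laguerre coefficients R_m = ∫_0^∞ u(t) · (ht)^{−α/2} · l_m^α(ht) dt. Then the Laguerre coefficients of the second time derivative satisfy, for every m, ∫_0^∞ u''(t) · (ht)^{−α/2} · l_m^α(ht) dt = (h²/4) · R_m + h² · √( m! / (m+α)! ) · Σ_{k=0}^{m−1} (m−k) · √( (k+α)! / k! ) · R_k. (This is the identity by which the integral Laguerre transform replaces the second time derivative in the wave equation by a constant multiple h²/4 of R_m plus a lower-triangular combination of the previously computed coefficients, so that the same elliptic operator is inverted for all harmonics.) -/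

import Mathlib

/-!
Writing `x = h t`, the weighted Laguerre function `(ht)^{-α/2} l_m^α(ht)` equals
`√(h m!/(m+α)!) φ_m(x)` with `φ_m(x) = e^{-x/2} L_m^α(x)`. The hockey-stick identity on the
coefficients of `L_n^α` gives `(L_n^α)' = -∑_{j<n} L_j^α`, hence
`φ_m'' = φ_m / 4 + ∑_{k<m} (m - k) φ_k`. Two integrations by parts move both derivatives from
`u` onto `φ_m(h ·)`, producing the factor `h²`; the boundary terms vanish at `0` because
`u(0) = u'(0) = 0` and at infinity because `u` has compact support. The square roots in the
formula only renormalise `φ_k` back into `l_k^α`.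
-/

open MeasureTheory

/-- The generalized Laguerre polynomial
`L_n^α(x) = ∑_{k=0}^{n} (−1)^k ⬝ C(n+α, n−k) ⬝ x^k / k!`. -/
noncomputable def lagPoly (α n : ℕ) (x : ℝ) : ℝ :=
  ∑ k ∈ Finset.range (n + 1),
    (-1 : ℝ) ^ k * ((n + α).choose (n - k) : ℝ) * x ^ k / (Nat.factorial k : ℝ)

/-- The orthonormal Laguerre function of degree `m` and order `α`, evaluated at `h⬝t`:
`l_m^α(ht) = √( h ⬝ m! / (m+α)! ) ⬝ (ht)^{α/2} ⬝ e^{−ht/2} ⬝ L_m^α(ht)`. -/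
noncomputable def lagFun (α : ℕ) (h : ℝ) (m : ℕ) (t : ℝ) : ℝ :=
  Real.sqrt (h * (Nat.factorial m : ℝ) / (Nat.factorial (m + α) : ℝ)) *
    (h * t) ^ ((α : ℝ) / 2) * Real.exp (-(h * t) / 2) * lagPoly α m (h * t)

open Finset Filter Set
open scoped Nat Topology

theorem Nat.sum_Ico_add_choose_sub (α k n : ℕ) (hk : k < n) :
    ∑ j ∈ Ico k n, (j + α).choose (j - k) = (n + α).choose (n - 1 - k) := by
  obtain ⟨N, rfl⟩ := Nat.exists_eq_add_of_lt hk
  rw [sum_Ico_eq_sum_range, show k + N + 1 - k = N + 1 by omega,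
    show k + N + 1 - 1 - k = N by omega]
  calc ∑ i ∈ range (N + 1), (k + i + α).choose (k + i - k)
      = ∑ i ∈ range (N + 1), (i + (k + α)).choose (k + α) :=
        sum_congr rfl fun i _ => by
          rw [Nat.add_sub_cancel_left, ← Nat.choose_symm_add]; ring_nf
    _ = (k + N + 1 + α).choose N := by
        rw [Nat.sum_range_add_choose, show N + (k + α) + 1 = N + (k + α + 1) by ring,
          ← Nat.choose_symm_add]
        ring_nf

theorem sum_range_lagPoly (α n : ℕ) (x : ℝ) :
    ∑ j ∈ range n, lagPoly α j x =
      ∑ k ∈ range n, (-1) ^ k * ((n + α).choose (n - 1 - k) : ℝ) * x ^ k / k ! := by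
  simp only [lagPoly, range_eq_Ico]
  rw [← sum_Ico_Ico_comm]
  refine sum_congr rfl fun k hk => ?_
  rw [← Nat.sum_Ico_add_choose_sub α k n (mem_Ico.1 hk).2, Nat.cast_sum, mul_sum, sum_mul,
    sum_div]

theorem hasDerivAt_lagPoly (α n : ℕ) (x : ℝ) :
    HasDerivAt (lagPoly α n) (-∑ j ∈ range n, lagPoly α j x) x := by
  have H := HasDerivAt.fun_sum (u := range (n + 1)) fun k _ =>
    ((hasDerivAt_pow k x).const_mul ((-1 : ℝ) ^ k * ((n + α).choose (n - k) : ℝ))).div_const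
      (k ! : ℝ)
  refine H.congr_deriv ?_
  rw [sum_range_lagPoly, sum_range_succ', ← sum_neg_distrib]
  simp only [CharP.cast_eq_zero, zero_mul, mul_zero, zero_div, add_zero]
  refine sum_congr rfl fun k _ => ?_
  rw [Nat.factorial_succ, show n - (k + 1) = n - 1 - k by omega]
  push_cast
  field_simp
  ring

theorem sum_range_sum_range_succ {R : Type*} [CommRing R] (m : ℕ) (F : ℕ → R) :
    ∑ j ∈ range m, ∑ k ∈ range (j + 1), F k = ∑ k ∈ range m, ((m : R) - k) * F k := by
  induction m with
  | zero => simp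
  | succ m ih =>
    rw [sum_range_succ, ih, sum_range_succ, sum_range_succ _ m, ← add_assoc, ← sum_add_distrib]
    push_cast
    congr 1
    · exact sum_congr rfl fun k _ => by ring
    · ring

noncomputable def expLagPoly (α m : ℕ) (x : ℝ) : ℝ :=
  Real.exp (-x / 2) * lagPoly α m x

theorem hasDerivAt_expLagPoly (α m : ℕ) (x : ℝ) :
    HasDerivAt (expLagPoly α m)
      (-(1 / 2) * expLagPoly α m x - ∑ j ∈ range m, expLagPoly α j x) x := by
  have hexp : HasDerivAt (fun y : ℝ => Real.exp (-y / 2)) (Real.exp (-x / 2) * (-1 / 2)) x :=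
    ((hasDerivAt_id x).neg.div_const 2).exp
  refine (hexp.mul (hasDerivAt_lagPoly α m x)).congr_deriv ?_
  simp only [expLagPoly, ← mul_sum]
  ring

@[fun_prop]
theorem continuous_expLagPoly (α m : ℕ) : Continuous (expLagPoly α m) :=
  continuous_iff_continuousAt.2 fun x => (hasDerivAt_expLagPoly α m x).continuousAt

theorem hasDerivAt_expLagPoly_deriv (α m : ℕ) (x : ℝ) :
    HasDerivAt (fun y => -(1 / 2) * expLagPoly α m y - ∑ j ∈ range m, expLagPoly α j y)
      (1 / 4 * expLagPoly α m x + ∑ k ∈ range m, ((m : ℝ) - k) * expLagPoly α k x) x := by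
  refine (((hasDerivAt_expLagPoly α m x).const_mul _).sub
    (HasDerivAt.fun_sum fun j _ => hasDerivAt_expLagPoly α j x)).congr_deriv ?_
  rw [← sum_range_sum_range_succ]
  simp only [sum_range_succ, sum_sub_distrib, sum_add_distrib, ← mul_sum]
  ring

theorem integral_Ioi_deriv_mul_eq_neg {u v v' : ℝ → ℝ} (hu : ContDiff ℝ 1 u)
    (hsupp : HasCompactSupport u) (hu0 : u 0 = 0) (hv : ∀ x, HasDerivAt v (v' x) x)
    (hv' : Continuous v') :
    ∫ x in Ioi 0, deriv u x * v x = -∫ x in Ioi 0, u x * v' x := by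
  have hvc : Continuous v := continuous_iff_continuousAt.2 fun x => (hv x).continuousAt
  have hud : Differentiable ℝ u := hu.differentiable one_ne_zero
  have huv_zero : Tendsto (u * v) (𝓝[>] 0) (𝓝 0) := by
    simpa [hu0] using ((hu.continuous.mul hvc).tendsto 0).mono_left nhdsWithin_le_nhds
  have huv_infty : Tendsto (u * v) atTop (𝓝 0) :=
    hsupp.mul_right.is_zero_at_infty.mono_left atTop_le_cocompact
  have hparts := integral_Ioi_mul_deriv_eq_deriv_mul (fun x _ => (hud x).hasDerivAt)
    (fun x _ => hv x)
    ((hu.continuous.mul hv').integrable_of_hasCompactSupport hsupp.mul_right).integrableOn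
    (((contDiff_one_iff_deriv.1 hu).2.mul hvc).integrable_of_hasCompactSupport
      hsupp.deriv.mul_right).integrableOn huv_zero huv_infty
  rw [hparts]
  ring

theorem integral_Ioi_deriv_deriv_mul_comp_mul {u f f' f'' : ℝ → ℝ} (hu : ContDiff ℝ 2 u)
    (hsupp : HasCompactSupport u) (hu0 : u 0 = 0) (hu'0 : deriv u 0 = 0)
    (hf : ∀ x, HasDerivAt f (f' x) x) (hf' : ∀ x, HasDerivAt f' (f'' x) x)
    (hf'' : Continuous f'') (h : ℝ) :
    ∫ t in Ioi 0, deriv (deriv u) t * f (h * t) = h ^ 2 * ∫ t in Ioi 0, u t * f'' (h * t) := by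
  have hcomp {g g' : ℝ → ℝ} (hg : ∀ x, HasDerivAt g (g' x) x) (t : ℝ) :
      HasDerivAt (fun t => g (h * t)) (h * g' (h * t)) t :=
    ((hg (h * t)).comp t ((hasDerivAt_id t).const_mul h)).congr_deriv
      (by simp [mul_comm])
  have hf'c : Continuous f' := continuous_iff_continuousAt.2 fun x => (hf' x).continuousAt
  have hu1 : ContDiff ℝ 1 (deriv u) := by
    simpa using (contDiff_succ_iff_deriv.1 (show ContDiff ℝ (1 + 1) u from hu)).2.2
  rw [integral_Ioi_deriv_mul_eq_neg hu1 hsupp.deriv hu'0 (hcomp hf) (by fun_prop),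
    integral_Ioi_deriv_mul_eq_neg (hu.of_le one_le_two) hsupp hu0
      (fun t => (hcomp hf' t).const_mul h) (by fun_prop), neg_neg, ← integral_const_mul]
  congr 1 with t
  ring

theorem rpow_neg_mul_lagFun {h t : ℝ} (hh : 0 < h) (ht : 0 < t) (α m : ℕ) :
    (h * t) ^ (-(α : ℝ) / 2) * lagFun α h m t =
      √(h * m ! / (m + α)!) * expLagPoly α m (h * t) := by
  have hpow : (h * t) ^ (-(α : ℝ) / 2) * (h * t) ^ ((α : ℝ) / 2) = 1 := by
    rw [← Real.rpow_add (mul_pos hh ht), neg_div, neg_add_cancel, Real.rpow_zero]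
  simp only [lagFun, expLagPoly]
  linear_combination
    (√(h * m ! / (m + α)!) * Real.exp (-(h * t) / 2) * lagPoly α m (h * t)) * hpow

theorem setIntegral_Ioi_mul_rpow_mul_lagFun {h : ℝ} (hh : 0 < h) (α m : ℕ) (v : ℝ → ℝ) :
    ∫ t in Ioi 0, v t * (h * t) ^ (-(α : ℝ) / 2) * lagFun α h m t =
      √(h * m ! / (m + α)!) * ∫ t in Ioi 0, v t * expLagPoly α m (h * t) := by
  rw [← integral_const_mul]
  refine setIntegral_congr_fun measurableSet_Ioi fun t ht => ?_
  rw [mul_assoc, rpow_neg_mul_lagFun hh ht, mul_left_comm]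

theorem sqrt_factorial_div_mul_sqrt_factorial_div (h : ℝ) (α m k : ℕ) :
    √(m ! / (m + α)!) * √((k + α)! / k !) * √(h * k ! / (k + α)!) =
      √(h * m ! / (m + α)!) := by
  rw [← Real.sqrt_mul (by positivity), ← Real.sqrt_mul (by positivity)]
  congr 1
  field_simp

/-- Laguerre transform of the second time derivative: if `u` is twice continuously
differentiable, compactly supported, with `u(0) = 0` and `u'(0) = 0`, and
`R_m = ∫_0^∞ u(t) ⬝ (ht)^{−α/2} ⬝ l_m^α(ht) dt`, then
`∫_0^∞ u''(t) ⬝ (ht)^{−α/2} ⬝ l_m^α(ht) dt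
  = (h²/4) R_m + h² √(m!/(m+α)!) ∑_{k=0}^{m−1} (m−k) √((k+α)!/k!) R_k`. -/
theorem laguerre_transform_second_deriv (α : ℕ) (h : ℝ) (hh : 0 < h)
    (u : ℝ → ℝ) (hu : ContDiff ℝ 2 u) (hsupp : HasCompactSupport u)
    (hu0 : u 0 = 0) (hu'0 : deriv u 0 = 0)
    (R : ℕ → ℝ)
    (hR : ∀ m, R m =
      ∫ t in Set.Ioi (0 : ℝ), u t * (h * t) ^ (-(α : ℝ) / 2) * lagFun α h m t)
    (m : ℕ) :
    ∫ t in Set.Ioi (0 : ℝ),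
        deriv (deriv u) t * (h * t) ^ (-(α : ℝ) / 2) * lagFun α h m t =
      h ^ 2 / 4 * R m +
        h ^ 2 * Real.sqrt ((Nat.factorial m : ℝ) / (Nat.factorial (m + α) : ℝ)) *
          ∑ k ∈ Finset.range m,
            ((m : ℝ) - (k : ℝ)) *
              Real.sqrt ((Nat.factorial (k + α) : ℝ) / (Nat.factorial k : ℝ)) * R k := by
  set J : ℕ → ℝ := fun k => ∫ t in Ioi 0, u t * expLagPoly α k (h * t)
  have hRJ (k : ℕ) : R k = √(h * k ! / (k + α)!) * J k :=
    (hR k).trans (setIntegral_Ioi_mul_rpow_mul_lagFun hh α k u)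
  have hint (k : ℕ) :
      Integrable (fun t => u t * expLagPoly α k (h * t)) (volume.restrict (Ioi 0)) :=
    ((hu.continuous.mul (by fun_prop)).integrable_of_hasCompactSupport hsupp.mul_right).restrict
  have hJ : ∫ t in Ioi 0, u t * (1 / 4 * expLagPoly α m (h * t) +
        ∑ k ∈ range m, ((m : ℝ) - k) * expLagPoly α k (h * t)) =
      1 / 4 * J m + ∑ k ∈ range m, ((m : ℝ) - k) * J k := by
    simp_rw [mul_add, mul_sum, mul_left_comm (u _)]
    rw [integral_add ((hint m).const_mul _)
        (integrable_finsetSum _ fun k _ => (hint k).const_mul _),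
      integral_finsetSum _ fun k _ => (hint k).const_mul _, integral_const_mul]
    simp_rw [integral_const_mul]
    rfl
  have hsum :
      √(m ! / (m + α)!) * ∑ k ∈ range m, ((m : ℝ) - k) * √((k + α)! / k !) * R k =
        √(h * m ! / (m + α)!) * ∑ k ∈ range m, ((m : ℝ) - k) * J k := by
    rw [mul_sum, mul_sum]
    refine sum_congr rfl fun k _ => ?_
    rw [hRJ, ← sqrt_factorial_div_mul_sqrt_factorial_div h α m k]
    ring
  rw [setIntegral_Ioi_mul_rpow_mul_lagFun hh, integral_Ioi_deriv_deriv_mul_comp_mul hu hsupp hu0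
    hu'0 (hasDerivAt_expLagPoly α m) (hasDerivAt_expLagPoly_deriv α m) (by fun_prop), hJ,
    mul_assoc (h ^ 2), hsum, hRJ m]
  ring
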